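/- arXiv:2302.05807 — 4 statements merged into one kernel-verified Lean document; each statement's English description precedes it below -/
import Mathlib

section
/- Let E be a real inner product space, X a set, h : X → E an embedding map, beta ∈ E, b0 ∈ ℝ, C ∈ ℝ, and o : X → ℝ a function with o(x) > 0 for all x. Assume that for every x ∈ X one has ⟨beta, h(x)⟩ + b0 = log o(x) + C. Then for all x1, x2 ∈ X: ‖beta‖ * ‖h(x1) - h(x2)‖ ≥ max( log(o(x1)/o(x2)), log(o(x2)/o(x1)) ) = |log o(x1) - log o(x2)|. In particular, if beta ≠ 0 then ‖h(x1)-h(x2)‖ ≥ (1/‖beta‖) * max( log(o(x1)/o(x2)), log(o(x2)/o(x1)) ). -/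
open scoped RealInnerProductSpace

/-- Bias-aware embedding distance: if a linear head on the representation `h` computes the
log odds of underrepresentation (up to the additive constant `C`), then the embedding
distance between any two points is lower bounded by the corresponding log odds ratio. -/
theorem bias_aware_embedding_distance
    {E : Type*} [NormedAddCommGroup E] [InnerProductSpace ℝ E]
    {X : Type*} (h : X → E) (beta : E) (b0 C : ℝ) (o : X → ℝ)
    (ho : ∀ x, 0 < o x)
    (hid : ∀ x, ⟪beta, h x⟫ + b0 = Real.log (o x) + C) :
    ∀ x1 x2 : X,
      ‖beta‖ * ‖h x1 - h x2‖ ≥ max (Real.log (o x1 / o x2)) (Real.log (o x2 / o x1)) ∧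
      max (Real.log (o x1 / o x2)) (Real.log (o x2 / o x1))
        = |Real.log (o x1) - Real.log (o x2)| ∧
      (beta ≠ 0 →
        ‖h x1 - h x2‖ ≥ (1 / ‖beta‖) *
          max (Real.log (o x1 / o x2)) (Real.log (o x2 / o x1))) := by
  intro x1 x2
  have hlog : ∀ a b : X, Real.log (o a / o b) = Real.log (o a) - Real.log (o b) :=
    fun a b => Real.log_div (ho a).ne' (ho b).ne'
  have hdiff : ⟪beta, h x1 - h x2⟫ = Real.log (o x1) - Real.log (o x2) := by
    rw [inner_sub_right]
    have h1 := hid x1; have h2 := hid x2; linarith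
  have hcs : |Real.log (o x1) - Real.log (o x2)| ≤ ‖beta‖ * ‖h x1 - h x2‖ := by
    rw [← hdiff]
    exact abs_real_inner_le_norm beta (h x1 - h x2)
  have hmax : max (Real.log (o x1 / o x2)) (Real.log (o x2 / o x1))
      = |Real.log (o x1) - Real.log (o x2)| := by
    rw [hlog x1 x2, hlog x2 x1, abs_eq_max_neg, neg_sub]
  refine ⟨by rw [hmax]; exact hcs, hmax, ?_⟩
  intro hb
  have hbpos : 0 < ‖beta‖ := norm_pos_iff.mpr hb
  rw [hmax, ge_iff_le, ← div_le_iff₀' hbpos, div_eq_inv_mul, inv_eq_one_div] at *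
  linarith [hcs]
end

section
/- In the setting of the optimal-allocation theorem (G finite nonempty, p > 0, c_g > 0, gamma_g > 0 with sum gamma = 1, omega ∈ (0,1), alpha* the unique minimizer of F_omega over the open simplex), the up-sampling vector theta can be chosen so that, in addition to theta_g ≥ omega, sum_g gamma_g theta_g = 1 and alpha*_g ∝ (gamma_g c_g theta_g)^{1/(p+1)}, the set of up-sampled groups {g : theta_g > omega} is downward closed with respect to the normalized representation gamma_g * c_g^{-1/p}: for all g, g' ∈ G, if gamma_g * c_g^{-1/p} < gamma_{g'} * c_{g'}^{-1/p} and theta_{g'} > omega, then theta_g > omega. Thus the subgroups with low representation normalized by learning difficulty are systematically up-sampled in the optimal allocation. -/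
/-!
At the minimiser `α` the worst-group risk `max_g c_g α_g^{-p}` is attained on an active set `A`,
and along every direction `d` with `∑ d = 0` the right derivative of `F_ω`, which by Danskin's
rule is `ω ∑ γ_g ψ_g'(α_g) d_g + (1 - ω) max_{g ∈ A} ψ_g'(α_g) d_g` for `ψ_g(x) = c_g x^{-p}`,
is nonnegative. Writing `β_g = p c_g α_g^{-p-1}` and `B = ∑ 1/β_g`, the directions `±(1/β - B e_g)` give
`ω γ_g β_g B ≤ 1` for every `g`, with equality off `A`. So `θ_g = 1/(γ_g β_g B)` satisfies
`θ ≥ ω`, `∑ γ θ = 1` and `γ_g c_g θ_g ∝ α_g^{p+1}`, and every up-sampled group is active.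
Since `c α^{-p-1} = (c α^{-p})^{(p+1)/p} c^{-1/p}`, the product `γ_g β_g` is at most
`p M^{(p+1)/p} γ_g c_g^{-1/p}` (`M` the maximal risk), with equality on `A`; hence a group of smaller
normalized representation than an up-sampled one has smaller `γ β`, i.e. larger `θ`.
-/

open Finset Filter Topology Set

section FiniteMax

variable {ι : Type*} {s A : Finset ι} {f : ι → ℝ → ℝ} {f' : ι → ℝ} {x : ℝ}

theorem HasDerivWithinAt.nonneg_of_eventually_le {φ : ℝ → ℝ} {φ' : ℝ}
    (hφ : HasDerivWithinAt φ φ' (Ioi x) x) (hmin : ∀ᶠ t in 𝓝[>] x, φ x ≤ φ t) : 0 ≤ φ' := by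
  refine ge_of_tendsto ((hasDerivWithinAt_iff_tendsto_slope' self_notMem_Ioi).1 hφ) ?_
  filter_upwards [hmin, self_mem_nhdsWithin] with t ht hxt
  rw [slope_def_field]
  exact div_nonneg (sub_nonneg.2 ht) (sub_nonneg.2 (le_of_lt hxt))

theorem hasDerivWithinAt_Ioi_finset_sup'_of_forall_eq {v : ℝ} (hs : s.Nonempty)
    (hf : ∀ i ∈ s, HasDerivAt (f i) (f' i) x) (hv : ∀ i ∈ s, f i x = v) :
    HasDerivWithinAt (fun t => s.sup' hs (f · t)) (s.sup' hs f') (Ioi x) x := by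
  rw [hasDerivWithinAt_iff_tendsto_slope' self_notMem_Ioi]
  have hslope : ∀ i ∈ s, Tendsto (slope (f i) x) (𝓝[>] x) (𝓝 (f' i)) := fun i hi =>
    (hf i hi).tendsto_slope.mono_left (nhdsWithin_mono _ fun t ht => ne_of_gt ht)
  refine (Tendsto.finset_sup'_nhds_apply hs hslope).congr' ?_
  filter_upwards [self_mem_nhdsWithin] with t hxt
  have hmono : Monotone fun y => (t - x)⁻¹ * (y - v) := fun a b hab =>
    mul_le_mul_of_nonneg_left (sub_le_sub_right hab v) (inv_nonneg.2 (sub_nonneg.2 (le_of_lt hxt)))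
  rw [slope_def_field, Finset.sup'_eq_of_forall hs _ hv, div_eq_inv_mul,
    apply_sup'_eq_sup'_comp hs (fun y => (t - x)⁻¹ * (y - v)) fun a b => hmono.map_max]
  exact Finset.sup'_congr hs rfl fun i hi => by simp [slope_def_field, hv i hi, div_eq_inv_mul]

theorem finset_sup'_eventuallyEq_of_lt (hs : s.Nonempty) (hA : A.Nonempty) (hAs : A ⊆ s)
    (hf : ∀ i ∈ s, ContinuousAt (f i) x)
    (hlt : ∀ i ∈ s, i ∉ A → f i x < A.sup' hA (f · x)) :
    (fun t => s.sup' hs (f · t)) =ᶠ[𝓝 x] fun t => A.sup' hA (f · t) := by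
  have hAcont : ContinuousAt (fun t => A.sup' hA (f · t)) x :=
    ContinuousAt.finset_sup'_apply hA fun i hi => hf i (hAs hi)
  have hev : ∀ᶠ t in 𝓝 x, ∀ i ∈ s, i ∉ A → f i t < A.sup' hA (f · t) :=
    (eventually_all_finset s).2 fun i hi => by
      by_cases hiA : i ∈ A
      · exact Eventually.of_forall fun _ h => absurd hiA h
      · exact ((hf i hi).eventually_lt hAcont (hlt i hi hiA)).mono fun _ h _ => h
  filter_upwards [hev] with t ht
  refine le_antisymm (Finset.sup'_le _ _ fun i hi => ?_) (Finset.sup'_mono _ hAs hA)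
  by_cases hiA : i ∈ A
  · exact Finset.le_sup' (f · t) hiA
  · exact (ht i hi hiA).le

theorem hasDerivWithinAt_Ioi_finset_sup' (hs : s.Nonempty) (hA : A.Nonempty) (hAs : A ⊆ s)
    (hf : ∀ i ∈ s, HasDerivAt (f i) (f' i) x)
    (hactive : ∀ i ∈ s, i ∈ A ↔ f i x = s.sup' hs (f · x)) :
    HasDerivWithinAt (fun t => s.sup' hs (f · t)) (A.sup' hA f') (Ioi x) x := by
  have hv : ∀ i ∈ A, f i x = s.sup' hs (f · x) := fun i hi => (hactive i (hAs hi)).1 hi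
  have hAsup : A.sup' hA (f · x) = s.sup' hs (f · x) := Finset.sup'_eq_of_forall hA _ hv
  have heq := finset_sup'_eventuallyEq_of_lt hs hA hAs (fun i hi => (hf i hi).continuousAt)
    fun i hi hiA => hAsup ▸ lt_of_le_of_ne (Finset.le_sup' (f · x) hi) (mt (hactive i hi).2 hiA)
  exact (hasDerivWithinAt_Ioi_finset_sup'_of_forall_eq hA (fun i hi => hf i (hAs hi)) hv
    ).congr_of_eventuallyEq (nhdsWithin_le_nhds heq) heq.eq_of_nhds

end FiniteMax

section FrontierObjective

variable {G : Type*} [Fintype G] [Nonempty G]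

noncomputable def frontierObjective (ω : ℝ) (γ : G → ℝ) (ψ : G → ℝ → ℝ) (α : G → ℝ) : ℝ :=
  ω * ∑ g, γ g * ψ g (α g) + (1 - ω) * univ.sup' univ_nonempty (fun g => ψ g (α g))

noncomputable def activeGroups (ψ : G → ℝ → ℝ) (α : G → ℝ) : Finset G :=
  univ.filter fun g => ψ g (α g) = univ.sup' univ_nonempty (fun g => ψ g (α g))

theorem activeGroups_nonempty (ψ : G → ℝ → ℝ) (α : G → ℝ) : (activeGroups ψ α).Nonempty := by
  obtain ⟨g, -, hg⟩ := exists_mem_eq_sup' univ_nonempty fun g => ψ g (α g)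
  exact ⟨g, mem_filter.2 ⟨mem_univ g, hg.symm⟩⟩

variable {ω : ℝ} {γ : G → ℝ} {ψ : G → ℝ → ℝ} {ψ' α : G → ℝ}

theorem hasDerivWithinAt_frontierObjective_add_smul
    (hψ : ∀ g, HasDerivAt (ψ g) (ψ' g) (α g)) (d : G → ℝ) :
    HasDerivWithinAt (fun t : ℝ => frontierObjective ω γ ψ (α + t • d))
      (ω * ∑ g, γ g * (ψ' g * d g) + (1 - ω) *
        (activeGroups ψ α).sup' (activeGroups_nonempty ψ α) fun g => ψ' g * d g) (Ioi 0) 0 := by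
  have hline : ∀ g, HasDerivAt (fun t : ℝ => ψ g ((α + t • d) g)) (ψ' g * d g) 0 := fun g => by
    have hlin : HasDerivAt (fun t : ℝ => α g + t * d g) (d g) 0 := by
      simpa using ((hasDerivAt_id (0 : ℝ)).mul_const (d g)).const_add (α g)
    simpa [Function.comp_def] using (hψ g).comp_of_eq 0 hlin (by simp)
  have hmax := hasDerivWithinAt_Ioi_finset_sup' univ_nonempty (activeGroups_nonempty ψ α)
    (subset_univ _) (fun g _ => hline g) fun g _ => by simp [activeGroups]
  exact ((HasDerivAt.fun_sum fun g _ => (hline g).const_mul (γ g)).hasDerivWithinAt.const_mul ω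
    ).add (hmax.const_mul (1 - ω))

theorem frontierObjective_firstOrder
    (hψ : ∀ g, HasDerivAt (ψ g) (ψ' g) (α g)) (hα : ∀ g, 0 < α g) (hα1 : ∑ g, α g = 1)
    (hmin : ∀ b : G → ℝ, (∀ g, 0 < b g) → ∑ g, b g = 1 →
      frontierObjective ω γ ψ α ≤ frontierObjective ω γ ψ b)
    (d : G → ℝ) (hd : ∑ g, d g = 0) :
    0 ≤ ω * ∑ g, γ g * (ψ' g * d g) + (1 - ω) *
        (activeGroups ψ α).sup' (activeGroups_nonempty ψ α) fun g => ψ' g * d g := by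
  refine (hasDerivWithinAt_frontierObjective_add_smul hψ d).nonneg_of_eventually_le ?_
  have hpos : ∀ᶠ t in 𝓝 (0 : ℝ), ∀ g, 0 < (α + t • d) g := eventually_all.2 fun g =>
    continuousAt_const.eventually_lt
      (continuous_const.add (continuous_id.mul continuous_const)).continuousAt (by simpa using hα g)
  filter_upwards [nhdsWithin_le_nhds hpos] with t ht
  simpa using hmin _ ht (by simp [sum_add_distrib, ← mul_sum, hα1, hd])

end FrontierObjective

section Upsampling

variable {G : Type*} [Fintype G] {ω : ℝ} {γ β : G → ℝ}

noncomputable def upsampling (γ β : G → ℝ) (g : G) : ℝ := (γ g * β g * ∑ k, (β k)⁻¹)⁻¹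

theorem sum_mul_upsampling [Nonempty G] (hγ : ∀ g, γ g ≠ 0) (hβ : ∀ g, 0 < β g) :
    ∑ g, γ g * upsampling γ β g = 1 := by
  have hB : ∑ k, (β k)⁻¹ ≠ 0 := (sum_pos (fun k _ => inv_pos.2 (hβ k)) univ_nonempty).ne'
  simp only [upsampling, mul_inv, ← mul_assoc, mul_inv_cancel₀ (hγ _), one_mul, ← sum_mul,
    mul_inv_cancel₀ hB]

theorem upsampling_lt_upsampling (hβ : ∀ g, 0 < β g) {g g' : G}
    (hg : 0 < γ g * β g) (hlt : γ g * β g < γ g' * β g') :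
    upsampling γ β g' < upsampling γ β g := by
  have hB : 0 < ∑ k, (β k)⁻¹ := sum_pos (fun k _ => inv_pos.2 (hβ k)) ⟨g, mem_univ g⟩
  exact inv_strictAnti₀ (mul_pos hg hB) (mul_lt_mul_of_pos_right hlt hB)

variable [DecidableEq G] {A : Finset G} {hA : A.Nonempty}

theorem le_upsampling (hω : ω ≤ 1) (hγ : ∀ g, 0 < γ g) (hγ1 : ∑ g, γ g = 1)
    (hβ : ∀ g, 0 < β g)
    (hfo : ∀ d : G → ℝ, ∑ g, d g = 0 →
      0 ≤ ω * ∑ g, γ g * (-β g * d g) + (1 - ω) * A.sup' hA fun g => -β g * d g)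
    (g : G) : ω ≤ upsampling γ β g := by
  set B := ∑ k, (β k)⁻¹
  have hB : 0 < B := sum_pos (fun k _ => inv_pos.2 (hβ k)) ⟨g, mem_univ g⟩
  set e : G → ℝ := fun k => if k = g then B else 0
  have hterm : ∀ k, -β k * (e k - (β k)⁻¹) = 1 - β k * e k := fun k => by
    rw [mul_sub, neg_mul, neg_mul, mul_inv_cancel₀ (hβ k).ne']
    ring
  have hfo' := hfo (fun k => e k - (β k)⁻¹) (by simp [e, sum_sub_distrib, B])
  simp only [hterm, mul_sub, mul_one, sum_sub_distrib, hγ1] at hfo'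
  have hsup : (A.sup' hA fun k => 1 - β k * e k) ≤ 1 :=
    sup'_le _ _ fun k _ => sub_le_self _ <| mul_nonneg (hβ k).le <| by
      by_cases hk : k = g <;> simp [e, hk, hB.le]
  have hsum : ∑ k, γ k * (β k * e k) = γ g * β g * B := by
    simp [e, mul_assoc]
  rw [hsum] at hfo'
  rw [upsampling, ← one_div, le_div_iff₀ (mul_pos (mul_pos (hγ g) (hβ g)) hB)]
  linarith [mul_le_mul_of_nonneg_left hsup (sub_nonneg.2 hω)]

theorem upsampling_le_of_notMem (hγ : ∀ g, 0 < γ g) (hγ1 : ∑ g, γ g = 1)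
    (hβ : ∀ g, 0 < β g)
    (hfo : ∀ d : G → ℝ, ∑ g, d g = 0 →
      0 ≤ ω * ∑ g, γ g * (-β g * d g) + (1 - ω) * A.sup' hA fun g => -β g * d g)
    {h : G} (hh : h ∉ A) : upsampling γ β h ≤ ω := by
  set B := ∑ k, (β k)⁻¹
  have hB : 0 < B := sum_pos (fun k _ => inv_pos.2 (hβ k)) ⟨h, mem_univ h⟩
  set e : G → ℝ := fun k => if k = h then B else 0
  have hterm : ∀ k, -β k * ((β k)⁻¹ - e k) = β k * e k - 1 := fun k => by
    rw [mul_sub, neg_mul, neg_mul, mul_inv_cancel₀ (hβ k).ne']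
    ring
  have hfo' := hfo (fun k => (β k)⁻¹ - e k) (by simp [e, sum_sub_distrib, B])
  simp only [hterm, mul_sub, mul_one, sum_sub_distrib, hγ1] at hfo'
  have hsup : (A.sup' hA fun k => β k * e k - 1) = -1 :=
    sup'_eq_of_forall hA _ fun k hk => by simp [e, ne_of_mem_of_not_mem hk hh]
  have hsum : ∑ k, γ k * (β k * e k) = γ h * β h * B := by
    simp [e, mul_assoc]
  rw [hsum, hsup] at hfo'
  rw [upsampling, inv_le_iff_one_le_mul₀ (mul_pos (mul_pos (hγ h) (hβ h)) hB)]
  linarith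

end Upsampling

section PowerLaw

variable {G : Type*} {p : ℝ} {c γ α : G → ℝ}

theorem hasDerivAt_mul_rpow_neg (c : ℝ) {p x : ℝ} (hx : 0 < x) :
    HasDerivAt (fun y => c * y ^ (-p)) (-(p * c * x ^ (-p - 1))) x :=
  ((Real.hasDerivAt_rpow_const (Or.inl hx.ne')).const_mul c).congr_deriv (by ring)

theorem mul_rpow_neg_sub_one {c x p : ℝ} (hc : 0 < c) (hx : 0 < x) (hp : p ≠ 0) :
    c * x ^ (-p - 1) = (c * x ^ (-p)) ^ ((p + 1) / p) * c ^ (-(1 / p)) := by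
  rw [Real.mul_rpow hc.le (Real.rpow_nonneg hx.le _), ← Real.rpow_mul hx.le, mul_right_comm,
    ← Real.rpow_add hc]
  have h1 : (p + 1) / p + -(1 / p) = 1 := by field_simp; ring
  have h2 : -p * ((p + 1) / p) = -p - 1 := by field_simp; ring
  rw [h1, h2, Real.rpow_one]

noncomputable def riskSlope (p : ℝ) (c α : G → ℝ) (g : G) : ℝ := p * c g * α g ^ (-p - 1)

theorem riskSlope_pos (hp : 0 < p) (hc : ∀ g, 0 < c g) (hα : ∀ g, 0 < α g) (g : G) :
    0 < riskSlope p c α g :=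
  mul_pos (mul_pos hp (hc g)) (Real.rpow_pos_of_pos (hα g) _)

theorem mul_riskSlope_lt_of_risk_le (hp : 0 < p) (hc : ∀ g, 0 < c g) (hα : ∀ g, 0 < α g)
    {g g' : G} (hγ : 0 ≤ γ g) (hrisk : c g * α g ^ (-p) ≤ c g' * α g' ^ (-p))
    (hrep : γ g * c g ^ (-(1 / p)) < γ g' * c g' ^ (-(1 / p))) :
    γ g * riskSlope p c α g < γ g' * riskSlope p c α g' := by
  have hform : ∀ k, γ k * riskSlope p c α k
      = p * (c k * α k ^ (-p)) ^ ((p + 1) / p) * (γ k * c k ^ (-(1 / p))) := fun k => by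
    rw [riskSlope, mul_assoc p, mul_rpow_neg_sub_one (hc k) (hα k) hp.ne']
    ring
  rw [hform, hform]
  calc p * (c g * α g ^ (-p)) ^ ((p + 1) / p) * (γ g * c g ^ (-(1 / p)))
      ≤ p * (c g' * α g' ^ (-p)) ^ ((p + 1) / p) * (γ g * c g ^ (-(1 / p))) := by
        gcongr
        exacts [mul_nonneg hγ (Real.rpow_nonneg (hc g).le _),
          (mul_pos (hc g) (Real.rpow_pos_of_pos (hα g) _)).le]
    _ < _ := mul_lt_mul_of_pos_left hrep <| mul_pos hp <|
        Real.rpow_pos_of_pos (mul_pos (hc g') (Real.rpow_pos_of_pos (hα g') _)) _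

theorem mul_mul_upsampling_riskSlope [Fintype G] (hp : p ≠ 0) (hc : ∀ g, c g ≠ 0)
    (hγ : ∀ g, γ g ≠ 0) (hα : ∀ g, 0 < α g) (g : G) :
    γ g * c g * upsampling γ (riskSlope p c α) g
      = (p * ∑ k, (riskSlope p c α k)⁻¹)⁻¹ * α g ^ (p + 1) := by
  have hpow : α g ^ (-p - 1) = (α g ^ (p + 1))⁻¹ := by
    rw [← Real.rpow_neg (hα g).le, neg_add']
  simp only [upsampling, riskSlope, hpow, mul_inv, inv_inv]
  field_simp [hγ g, hc g]

end PowerLaw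

theorem eq_rpow_div_sum_rpow {G : Type*} [Fintype G] {α x : G → ℝ} {κ q : ℝ} (hκ : 0 < κ)
    (hq : q ≠ 0) (hα : ∀ g, 0 ≤ α g) (hα1 : ∑ g, α g = 1) (hx : ∀ g, x g = κ * α g ^ q)
    (g : G) : α g = x g ^ (1 / q) / ∑ g', x g' ^ (1 / q) := by
  have hroot : ∀ g, x g ^ (1 / q) = κ ^ (1 / q) * α g := fun g => by
    rw [hx, Real.mul_rpow hκ.le (Real.rpow_nonneg (hα g) _), one_div,
      Real.rpow_rpow_inv (hα g) hq]
  simp only [hroot, ← mul_sum, hα1, mul_one]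
  field_simp [(Real.rpow_pos_of_pos hκ (1 / q)).ne']

/-- The up-sampling vector `θ` for the unique minimizer of the accuracy–fairness frontier
objective can be chosen so that the set of up-sampled groups `{g : θ g > ω}` is downward
closed with respect to the normalized representation `γ g * (c g) ^ (-1/p)`: groups with
low representation normalized by learning difficulty are systematically up-sampled. -/
theorem optimal_allocation_upsampled_groups_downward_closed
    {G : Type*} [Fintype G] [Nonempty G]
    (p ω : ℝ) (hp : 0 < p) (hω : ω ∈ Set.Ioo (0 : ℝ) 1)
    (c γ : G → ℝ) (hc : ∀ g, 0 < c g) (hγ : ∀ g, 0 < γ g) (hγsum : ∑ g, γ g = 1)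
    (S : Set (G → ℝ)) (hS : S = {α : G → ℝ | (∀ g, 0 < α g) ∧ ∑ g, α g = 1})
    (F : (G → ℝ) → ℝ)
    (hF : ∀ α, F α = ω * ∑ g, γ g * c g * α g ^ (-p)
        + (1 - ω) * Finset.univ.sup' Finset.univ_nonempty (fun g => c g * α g ^ (-p)))
    (α : G → ℝ) (hα : α ∈ S) (hmin : ∀ b ∈ S, F α ≤ F b) :
    ∃ θ : G → ℝ,
      (∀ g, ω ≤ θ g) ∧
      (∑ g, γ g * θ g = 1) ∧
      (∀ g, α g = (γ g * c g * θ g) ^ (1 / (p + 1)) /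
          ∑ g', (γ g' * c g' * θ g') ^ (1 / (p + 1))) ∧
      (∀ g g' : G, γ g * c g ^ (-(1 / p)) < γ g' * c g' ^ (-(1 / p)) →
        ω < θ g' → ω < θ g) := by
  classical
  subst hS
  obtain ⟨hα0, hα1⟩ := hα
  set ψ : G → ℝ → ℝ := fun g x => c g * x ^ (-p)
  set β := riskSlope p c α
  have hβ : ∀ g, 0 < β g := riskSlope_pos hp hc hα0
  have hB : 0 < ∑ k, (β k)⁻¹ := sum_pos (fun k _ => inv_pos.2 (hβ k)) univ_nonempty
  have hfo := frontierObjective_firstOrder (ω := ω) (γ := γ) (ψ' := fun g => -β g)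
    (fun g => hasDerivAt_mul_rpow_neg (c g) (hα0 g)) hα0 hα1 fun b hb0 hb1 => by
      simpa only [hF, frontierObjective, ψ, mul_assoc] using hmin b ⟨hb0, hb1⟩
  refine ⟨upsampling γ β, le_upsampling hω.2.le hγ hγsum hβ hfo,
    sum_mul_upsampling (fun g => (hγ g).ne') hβ,
    eq_rpow_div_sum_rpow (inv_pos.2 (mul_pos hp hB)) (by linarith) (fun g => (hα0 g).le) hα1
      (mul_mul_upsampling_riskSlope hp.ne' (fun g => (hc g).ne') (fun g => (hγ g).ne') hα0),
    fun g g' hrep hθ => ?_⟩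
  have hg' : g' ∈ activeGroups ψ α := by
    by_contra h
    exact (upsampling_le_of_notMem hγ hγsum hβ hfo h).not_gt hθ
  have hrisk : ψ g (α g) ≤ ψ g' (α g') :=
    (mem_filter.1 hg').2 ▸ le_sup' (fun k => ψ k (α k)) (mem_univ g)
  exact hθ.trans <| upsampling_lt_upsampling hβ (mul_pos (hγ g) (hβ g))
    (mul_riskSlope_lt_of_risk_le hp hc hα0 (hγ g).le hrisk hrep)
end

section
/- Let G be a finite nonempty set, p > 0, and w, c : G → ℝ with w_g > 0 and c_g > 0 for all g. The function alpha ↦ sum_g w_g c_g alpha_g^{-p} on the open probability simplex {alpha : alpha_g > 0, sum_g alpha_g = 1} attains its minimum at the unique point alpha*_g = (w_g c_g)^{1/(p+1)} / sum_{g'} (w_{g'} c_{g'})^{1/(p+1)}, and the minimum value equals ( sum_g (w_g c_g)^{1/(p+1)} )^{p+1}. -/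
/-!
Put `a g = (w g * c g) ^ (1 / (p + 1))`, so that `w g * c g = a g ^ (p + 1)`. For `b` in the
simplex the risk is `∑ g, b g * (a g / b g) ^ (p + 1)`, a Jensen sum of the strictly convex
function `t ↦ t ^ (p + 1)` with weights `b g` at the points `a g / b g`, whose barycentre is
`∑ g, a g`. Hence the risk is at least `(∑ g, a g) ^ (p + 1)`, with equality exactly when all
`a g / b g` coincide, i.e. when `b g = a g / ∑ g', a g'`.
-/

open Finset Real

lemma rpow_add_one_mul_rpow_neg {x y : ℝ} (hx : 0 ≤ x) (hy : 0 < y) (p : ℝ) :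
    x ^ (p + 1) * y ^ (-p) = y * (x / y) ^ (p + 1) := by
  rw [div_rpow hx hy.le, rpow_neg hy.le, rpow_add_one hy.ne']
  field_simp

section PowerMeanAllocation

variable {ι : Type*} {s : Finset ι} {a b : ι → ℝ} {p : ℝ}

lemma sum_smul_div_eq_sum (hb : ∀ i ∈ s, 0 < b i) :
    ∑ i ∈ s, b i • (a i / b i) = ∑ i ∈ s, a i :=
  sum_congr rfl fun i hi => by rw [smul_eq_mul, mul_div_cancel₀ _ (hb i hi).ne']

lemma sum_rpow_mul_rpow_neg_eq_sum_smul (ha : ∀ i ∈ s, 0 ≤ a i) (hb : ∀ i ∈ s, 0 < b i) :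
    ∑ i ∈ s, a i ^ (p + 1) * b i ^ (-p) = ∑ i ∈ s, b i • (a i / b i) ^ (p + 1) :=
  sum_congr rfl fun i hi => rpow_add_one_mul_rpow_neg (ha i hi) (hb i hi) p

lemma rpow_sum_le_sum_rpow_mul_rpow_neg (hp : 0 ≤ p) (ha : ∀ i ∈ s, 0 ≤ a i)
    (hb : ∀ i ∈ s, 0 < b i) (hb₁ : ∑ i ∈ s, b i = 1) :
    (∑ i ∈ s, a i) ^ (p + 1) ≤ ∑ i ∈ s, a i ^ (p + 1) * b i ^ (-p) := by
  rw [sum_rpow_mul_rpow_neg_eq_sum_smul ha hb, ← sum_smul_div_eq_sum hb]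
  exact (convexOn_rpow (by linarith)).map_sum_le (fun i hi => (hb i hi).le) hb₁
    fun i hi => div_nonneg (ha i hi) (hb i hi).le

lemma eq_div_sum_of_rpow_sum_eq_sum_rpow_mul_rpow_neg (hp : 0 < p) (ha : ∀ i ∈ s, 0 < a i)
    (hb : ∀ i ∈ s, 0 < b i) (hb₁ : ∑ i ∈ s, b i = 1)
    (h : (∑ i ∈ s, a i) ^ (p + 1) = ∑ i ∈ s, a i ^ (p + 1) * b i ^ (-p)) :
    ∀ i ∈ s, b i = a i / ∑ j ∈ s, a j := by
  rw [sum_rpow_mul_rpow_neg_eq_sum_smul (fun i hi => (ha i hi).le) hb,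
    ← sum_smul_div_eq_sum hb] at h
  have hconst := ((strictConvexOn_rpow (by linarith)).map_sum_eq_iff hb hb₁
    fun i hi => div_nonneg (ha i hi).le (hb i hi).le).1 h
  intro i hi
  rw [← sum_smul_div_eq_sum hb, ← hconst i hi, div_div_cancel₀ (ha i hi).ne']

lemma sum_rpow_mul_div_sum_rpow_neg (hs : s.Nonempty) (ha : ∀ i ∈ s, 0 < a i) :
    ∑ i ∈ s, a i ^ (p + 1) * (a i / ∑ j ∈ s, a j) ^ (-p) =
      (∑ i ∈ s, a i) ^ (p + 1) := by
  have hT : 0 < ∑ j ∈ s, a j := sum_pos ha hs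
  calc ∑ i ∈ s, a i ^ (p + 1) * (a i / ∑ j ∈ s, a j) ^ (-p)
      = ∑ i ∈ s, a i / (∑ j ∈ s, a j) * (∑ j ∈ s, a j) ^ (p + 1) :=
        sum_congr rfl fun i hi => by
          rw [rpow_add_one_mul_rpow_neg (ha i hi).le (div_pos (ha i hi) hT),
            div_div_cancel₀ (ha i hi).ne']
    _ = (∑ i ∈ s, a i) ^ (p + 1) := by
        rw [← sum_mul, ← sum_div, div_self hT.ne', one_mul]

end PowerMeanAllocation

/-- Optimal group-size allocation for the weighted population risk: the function
`α ↦ ∑ g, w g * c g * α g ^ (-p)` on the open probability simplex attains its minimum at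
the unique point `α g = (w g * c g) ^ (1/(p+1)) / ∑ g', (w g' * c g') ^ (1/(p+1))`,
with minimum value `(∑ g, (w g * c g) ^ (1/(p+1))) ^ (p+1)`. -/
theorem weighted_risk_optimal_allocation
    {G : Type*} [Fintype G] [Nonempty G]
    (p : ℝ) (hp : 0 < p)
    (w c : G → ℝ) (hw : ∀ g, 0 < w g) (hc : ∀ g, 0 < c g)
    (S : Set (G → ℝ)) (hS : S = {α : G → ℝ | (∀ g, 0 < α g) ∧ ∑ g, α g = 1})
    (F : (G → ℝ) → ℝ) (hF : ∀ α, F α = ∑ g, w g * c g * α g ^ (-p))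
    (α : G → ℝ)
    (hα : ∀ g, α g = (w g * c g) ^ (1 / (p + 1)) /
        ∑ g', (w g' * c g') ^ (1 / (p + 1))) :
    α ∈ S ∧
    (∀ b ∈ S, F α ≤ F b) ∧
    (∀ b ∈ S, F b = F α → b = α) ∧
    F α = (∑ g, (w g * c g) ^ (1 / (p + 1))) ^ (p + 1) := by
  subst hS
  set a : G → ℝ := fun g => (w g * c g) ^ (1 / (p + 1))
  have ha : ∀ g ∈ univ, 0 < a g := fun g _ => rpow_pos_of_pos (mul_pos (hw g) (hc g)) _
  have hF' : ∀ b, F b = ∑ g, a g ^ (p + 1) * b g ^ (-p) := fun b => by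
    simp only [hF, a, one_div,
      rpow_inv_rpow (mul_pos (hw _) (hc _)).le (by linarith : p + 1 ≠ 0)]
  have hα' : α = fun g => a g / ∑ g', a g' := funext hα
  have hFα : F α = (∑ g, a g) ^ (p + 1) := by
    rw [hF', hα', sum_rpow_mul_div_sum_rpow_neg univ_nonempty ha]
  have hT : 0 < ∑ g, a g := sum_pos ha univ_nonempty
  refine ⟨⟨fun g => ?_, ?_⟩, fun b ⟨hb, hb₁⟩ => ?_, fun b ⟨hb, hb₁⟩ hFb => ?_, hFα⟩
  · rw [hα']; exact div_pos (ha g (mem_univ g)) hT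
  · rw [hα', ← sum_div, div_self hT.ne']
  · rw [hFα, hF']
    exact rpow_sum_le_sum_rpow_mul_rpow_neg hp.le (fun g hg => (ha g hg).le)
      (fun g _ => hb g) hb₁
  · rw [hFα, hF'] at hFb
    rw [hα']
    exact funext fun g => eq_div_sum_of_rpow_sum_eq_sum_rpow_mul_rpow_neg hp ha
      (fun g _ => hb g) hb₁ hFb.symm g (mem_univ g)
end

section
/- Let G be a finite nonempty set, p > 0, and c : G → ℝ with c_g > 0 for all g. The worst-case group risk alpha ↦ max_g c_g alpha_g^{-p} on the open probability simplex attains its minimum at the unique point alpha*_g = c_g^{1/p} / sum_{g'} c_{g'}^{1/p}; at this allocation all group risks are equal, c_g (alpha*_g)^{-p} = ( sum_{g'} c_{g'}^{1/p} )^{p} for every g, and this common value is the minimum of the worst-case risk over the simplex. In particular the optimal fairness-only allocation is proportional to the relative learning difficulty c_g^{1/p}, irrespective of the population group prevalences. -/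
open Finset

lemma aux_worst_case (p : ℝ) (hp : 0 < p) {c T x : ℝ} (hc : 0 < c) (hT : 0 < T)
    (hx : 0 < x) : c * x ^ (-p) ≤ T ^ p ↔ c ^ (1 / p) / T ≤ x := by
  have hxp : (0:ℝ) < x ^ p := Real.rpow_pos_of_pos hx p
  rw [Real.rpow_neg hx.le, mul_comm, inv_mul_le_iff₀ hxp, div_le_iff₀ hT, one_div,
    Real.rpow_inv_le_iff_of_pos hc.le (by positivity) hp, Real.mul_rpow hx.le hT.le,
    mul_comm (x ^ p)]

lemma aux_eq (p : ℝ) (hp : 0 < p) {c T : ℝ} (hc : 0 < c) (hT : 0 < T) :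
    c * (c ^ (1 / p) / T) ^ (-p) = T ^ p := by
  have h1 : (c ^ (1 / p)) ^ (-p) = c⁻¹ := by
    rw [← Real.rpow_mul hc.le, show 1 / p * -p = -1 by field_simp, Real.rpow_neg_one]
  rw [Real.div_rpow (by positivity) hT.le, h1, Real.rpow_neg hT.le]
  field_simp

/-- Optimal group-size allocation for the worst-case group risk: the function
`α ↦ max_g (c g * α g ^ (-p))` on the open probability simplex attains its minimum at the
unique point `α g = c g ^ (1/p) / ∑ g', c g' ^ (1/p)`; at this allocation all group risks
are equal to `(∑ g', c g' ^ (1/p)) ^ p`, which is the minimum worst-case risk. -/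
theorem worst_case_risk_optimal_allocation
    {G : Type*} [Fintype G] [Nonempty G]
    (p : ℝ) (hp : 0 < p)
    (c : G → ℝ) (hc : ∀ g, 0 < c g)
    (S : Set (G → ℝ)) (hS : S = {α : G → ℝ | (∀ g, 0 < α g) ∧ ∑ g, α g = 1})
    (M : (G → ℝ) → ℝ)
    (hM : ∀ α, M α = Finset.univ.sup' Finset.univ_nonempty (fun g => c g * α g ^ (-p)))
    (α : G → ℝ)
    (hα : ∀ g, α g = c g ^ (1 / p) / ∑ g', c g' ^ (1 / p)) :
    α ∈ S ∧
    (∀ g, c g * α g ^ (-p) = (∑ g', c g' ^ (1 / p)) ^ p) ∧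
    M α = (∑ g', c g' ^ (1 / p)) ^ p ∧
    (∀ b ∈ S, M α ≤ M b) ∧
    (∀ b ∈ S, M b = M α → b = α) := by
  set T : ℝ := ∑ g', c g' ^ (1 / p) with hT
  have hTpos : 0 < T := Finset.sum_pos (fun g _ => Real.rpow_pos_of_pos (hc g) _)
    Finset.univ_nonempty
  have hαpos : ∀ g, 0 < α g := fun g => by
    rw [hα g]; exact div_pos (Real.rpow_pos_of_pos (hc g) _) hTpos
  have hαsum : ∑ g, α g = 1 := by
    simp only [hα, ← Finset.sum_div]
    exact div_self hTpos.ne'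
  have hmem : α ∈ S := by rw [hS]; exact ⟨hαpos, hαsum⟩
  have heq : ∀ g, c g * α g ^ (-p) = T ^ p := fun g => by
    rw [hα g]; exact aux_eq p hp (hc g) hTpos
  have hMα : M α = T ^ p := by
    rw [hM]
    apply le_antisymm
    · exact Finset.sup'_le _ _ fun g _ => (heq g).le
    · have h2 := Finset.le_sup' (fun g => c g * α g ^ (-p))
        (Finset.mem_univ (Classical.arbitrary G))
      rwa [heq (Classical.arbitrary G)] at h2
  -- key: for b in S, each group risk ≤ T^p iff b g ≥ α g
  have hmin : ∀ b ∈ S, M α ≤ M b := by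
    intro b hb
    rw [hS] at hb
    obtain ⟨hbpos, hbsum⟩ := hb
    rw [hMα, hM]
    by_contra h
    push_neg at h
    have hlt : ∀ g, c g * b g ^ (-p) < T ^ p := fun g =>
      lt_of_le_of_lt (Finset.le_sup' (fun g => c g * b g ^ (-p)) (Finset.mem_univ g)) h
    have hgt : ∀ g, α g < b g := fun g => by
      have := (aux_worst_case p hp (hc g) hTpos (hbpos g)).mp (hlt g).le
      rcases lt_or_eq_of_le this with h' | h'
      · rwa [hα]
      · exfalso
        have : c g * b g ^ (-p) = T ^ p := by
          rw [← h', ← hα g]; exact heq g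
        exact absurd this (ne_of_lt (hlt g))
    have : (1:ℝ) < 1 := by
      calc (1:ℝ) = ∑ g, α g := hαsum.symm
      _ < ∑ g, b g := Finset.sum_lt_sum_of_nonempty Finset.univ_nonempty
          (fun g _ => hgt g)
      _ = 1 := hbsum
    exact lt_irrefl 1 this
  refine ⟨hmem, heq, hMα, hmin, ?_⟩
  intro b hb hMb
  rw [hS] at hb
  obtain ⟨hbpos, hbsum⟩ := hb
  have hle : ∀ g, α g ≤ b g := by
    intro g
    have hble : c g * b g ^ (-p) ≤ T ^ p := by
      rw [← hMα, ← hMb, hM]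
      exact Finset.le_sup' (fun g => c g * b g ^ (-p)) (Finset.mem_univ g)
    rw [hα]
    exact (aux_worst_case p hp (hc g) hTpos (hbpos g)).mp hble
  have hsum : ∑ g, α g = ∑ g, b g := by
    rw [hbsum, hαsum]
  funext g
  exact ((Finset.sum_eq_sum_iff_of_le (fun g _ => hle g)).mp hsum g
    (Finset.mem_univ g)).symm
end
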